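/- arXiv:2408.13799 — 3 statements merged into one kernel-verified Lean document; each statement's English description precedes it below -/
import Mathlib

section
/- Let g : ℝ₊ → (0,1] be continuous with g(t) ≤ g(0) + ∫_0^t ξ(g(s)) ds for all t ≥ 0, where ξ : (0,∞) → (0,∞) is continuous and increasing. Then g(t) ≤ γ(g(0), t) for all t ∈ [0, Ξ(g(0),∞)), where γ(u₀,·) is the inverse of v ↦ Ξ(u₀,v) = ∫_{u₀}^v ds/ξ(s). -/
open Set Topology intervalIntegral

/-! The majorant `G x = g 0 + ∫₀ˣ ξ (g s) ds` satisfies `G' = ξ ∘ g ≤ ξ ∘ G`, because `g ≤ G` and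
`ξ` is increasing. Hence `x ↦ x - Ξ(g 0, G x)` has nonnegative derivative, so
`Ξ(g 0, G t) ≤ t = Ξ(g 0, v)`; as `Ξ(g 0, ·)` is strictly increasing, `g t ≤ G t ≤ v`. -/

theorem hasDerivAt_integral_of_continuousOn {f : ℝ → ℝ} {s : Set ℝ} (hs : s.OrdConnected)
    (hf : ContinuousOn f s) {a x : ℝ} (ha : a ∈ s) (hx : s ∈ 𝓝 x) :
    HasDerivAt (fun u => ∫ t in a..u, f t) (f x) x :=
  integral_hasDerivAt_right
    ((hf.mono (hs.uIcc_subset ha (mem_of_mem_nhds hx))).intervalIntegrable)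
    (nhdsWithin_eq_nhds.2 hx ▸ hf.stronglyMeasurableAtFilter_nhdsWithin hs.measurableSet x)
    (hf.continuousAt hx)

theorem strictMonoOn_integral_of_pos {f : ℝ → ℝ} {s : Set ℝ} (hs : s.OrdConnected)
    (hf : ContinuousOn f s) (hpos : ∀ x ∈ s, 0 < f x) {a : ℝ} (ha : a ∈ s) :
    StrictMonoOn (fun u => ∫ t in a..u, f t) s := by
  have hint : ∀ u ∈ s, ∀ w ∈ s, IntervalIntegrable f MeasureTheory.volume u w :=
    fun u hu w hw => (hf.mono (hs.uIcc_subset hu hw)).intervalIntegrable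
  intro u hu w hw huw
  have hpos_uw : 0 < ∫ t in u..w, f t :=
    intervalIntegral_pos_of_pos_on (hint u hu w hw)
      (fun x hx => hpos x (hs.out hu hw (Ioo_subset_Icc_self hx))) huw
  have hsplit := integral_interval_sub_left (hint a ha w hw) (hint a ha u hu)
  show (∫ t in a..u, f t) < ∫ t in a..w, f t
  linarith

theorem integral_one_div_le_of_hasDerivAt_le {ξ G G' : ℝ → ℝ} {a b : ℝ} (hab : a ≤ b)
    (hξ : ContinuousOn ξ (Ioi 0)) (hξpos : ∀ s ∈ Ioi (0 : ℝ), 0 < ξ s)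
    (hG : ContinuousOn G (Icc a b)) (hGpos : ∀ x ∈ Icc a b, 0 < G x)
    (hG' : ∀ x ∈ Ioo a b, HasDerivAt G (G' x) x) (hle : ∀ x ∈ Ioo a b, G' x ≤ ξ (G x)) :
    ∫ s in G a..G b, 1 / ξ s ≤ b - a := by
  set Φ : ℝ → ℝ := fun u => ∫ s in G a..u, 1 / ξ s
  have hinv : ContinuousOn (fun s => 1 / ξ s) (Ioi 0) :=
    continuousOn_const.div hξ fun s hs => (hξpos s hs).ne'
  have hΦ : ∀ u ∈ Ioi (0 : ℝ), HasDerivAt Φ (1 / ξ u) u := fun u hu =>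
    hasDerivAt_integral_of_continuousOn ordConnected_Ioi hinv
      (hGpos a (left_mem_Icc.2 hab)) (isOpen_Ioi.mem_nhds hu)
  have hF : ∀ x ∈ Ioo a b, HasDerivAt (fun x => x - Φ (G x)) (1 - 1 / ξ (G x) * G' x) x :=
    fun x hx => (hasDerivAt_id x).sub ((hΦ _ (hGpos x (Ioo_subset_Icc_self hx))).comp x (hG' x hx))
  have hΦG : ContinuousOn (fun x => Φ (G x)) (Icc a b) :=
    ContinuousOn.comp (fun u hu => (hΦ u hu).continuousAt.continuousWithinAt) hG hGpos
  have hF_mono : MonotoneOn (fun x => x - Φ (G x)) (Icc a b) := by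
    refine monotoneOn_of_hasDerivWithinAt_nonneg (f' := fun x => 1 - 1 / ξ (G x) * G' x)
      (convex_Icc a b) (continuousOn_id.sub hΦG) (fun x hx => ?_) (fun x hx => ?_)
    all_goals rw [interior_Icc] at hx
    · exact (hF x hx).hasDerivWithinAt
    · rw [sub_nonneg, one_div_mul_eq_div, div_le_one (hξpos _ (hGpos x (Ioo_subset_Icc_self hx)))]
      exact hle x hx
  have := hF_mono (left_mem_Icc.2 hab) (right_mem_Icc.2 hab) hab
  simp only [Φ, integral_same, sub_zero] at this
  linarith

/-- Bihari–LaSalle/Osgood comparison lemma: if `g : ℝ₊ → (0,1]` is continuous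
with `g t ≤ g 0 + ∫_0^t ξ (g s) ds` for all `t ≥ 0`, where `ξ : (0,∞) → (0,∞)`
is continuous and increasing, then `g t ≤ γ (g 0) t` for every `t` in the
domain of the inverse `γ (g 0)` of `v ↦ Ξ (g 0) v = ∫_{g 0}^v ds / ξ s`;
i.e. whenever `v ≥ g 0` satisfies `Ξ (g 0) v = t`, we have `g t ≤ v`. -/
theorem bihari_comparison (ξ : ℝ → ℝ)
    (hcont : ContinuousOn ξ (Set.Ioi 0))
    (hpos : ∀ s ∈ Set.Ioi (0 : ℝ), 0 < ξ s)
    (hmono : MonotoneOn ξ (Set.Ioi 0))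
    (g : ℝ → ℝ) (hg_cont : ContinuousOn g (Set.Ici 0))
    (hg_range : ∀ t ≥ (0 : ℝ), g t ∈ Set.Ioc (0 : ℝ) 1)
    (hg_ineq : ∀ t ≥ (0 : ℝ), g t ≤ g 0 + ∫ s in (0 : ℝ)..t, ξ (g s)) :
    ∀ t ≥ (0 : ℝ), ∀ v : ℝ, g 0 ≤ v → (∫ s in (g 0)..v, 1 / ξ s) = t →
      g t ≤ v := by
  intro t ht v hv hΞ
  set G : ℝ → ℝ := fun x => g 0 + ∫ s in (0 : ℝ)..x, ξ (g s)
  have hg0 : 0 < g 0 := (hg_range 0 le_rfl).1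
  have hξg : ContinuousOn (fun s => ξ (g s)) (Ici 0) :=
    hcont.comp hg_cont fun s hs => (hg_range s hs).1
  have hG_ge : ∀ x ∈ Icc 0 t, g 0 ≤ G x := fun x hx =>
    le_add_of_nonneg_right (integral_nonneg hx.1 fun s hs => (hpos _ (hg_range s hs.1).1).le)
  have hG_pos : ∀ x ∈ Icc 0 t, 0 < G x := fun x hx => hg0.trans_le (hG_ge x hx)
  have hG_cont : ContinuousOn G (Icc 0 t) := by
    rw [← uIcc_of_le ht]
    exact continuousOn_const.add (continuousOn_primitive_interval'
      (hξg.mono (ordConnected_Ici.uIcc_subset self_mem_Ici ht)).intervalIntegrable left_mem_uIcc)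
  have hG' : ∀ x ∈ Ioo 0 t, HasDerivAt G (ξ (g x)) x := fun x hx =>
    (hasDerivAt_integral_of_continuousOn ordConnected_Ici hξg self_mem_Ici
      (Ici_mem_nhds hx.1)).const_add _
  have hG'_le : ∀ x ∈ Ioo 0 t, ξ (g x) ≤ ξ (G x) := fun x hx =>
    hmono (hg_range x hx.1.le).1 (hG_pos x (Ioo_subset_Icc_self hx)) (hg_ineq x hx.1.le)
  have hΞ_Gt : ∫ s in g 0..G t, 1 / ξ s ≤ ∫ s in g 0..v, 1 / ξ s := by
    have hG0 : G 0 = g 0 := by simp only [G, integral_same, add_zero]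
    have := integral_one_div_le_of_hasDerivAt_le ht hcont hpos hG_cont hG_pos hG' hG'_le
    rw [hG0, sub_zero] at this
    exact this.trans_eq hΞ.symm
  have hΞ_mono : StrictMonoOn (fun u => ∫ s in g 0..u, 1 / ξ s) (Ioi 0) :=
    strictMonoOn_integral_of_pos ordConnected_Ioi
      (continuousOn_const.div hcont fun s hs => (hpos s hs).ne')
      (fun s hs => one_div_pos.2 (hpos s hs)) hg0
  calc g t ≤ G t := hg_ineq t ht
    _ ≤ v := (hΞ_mono.le_iff_le (hG_pos t (right_mem_Icc.2 ht)) (hg0.trans_le hv)).1 hΞ_Gt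
end

section
/- For the linear-growth generator of the paper: if b satisfies the directional linear growth |⟨b(x),u⟩| ≤ μ|⟨x,u⟩| for all unit u, and the dispersion matrix a = σσ^T satisfies Σ_{j=1}^k ⟨a y_j, y_j⟩ ≥ 3⟨a Ĝ, Ĝ⟩ pointwise, then the elliptic operator A g(x) = ⟨b(x),∇g(x)⟩ + ½ Tr(a(x)Hess(g)(x)) applied to H(x) = (1+|G(x)|²)^{-1/2} satisfies A H ≤ μ H on ℝ^d. -/
/-!
Write `P` for the projection onto `span y` and `Q = 1 + ‖P x‖²`, so that `H = Q^{-1/2}`,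
`∇H = -Q^{-3/2} P x` and `D²H = -Q^{-3/2} ⟪P ·, P ·⟫ + 3 Q^{-5/2} ⟪P x, ·⟫ ⟪P x, ·⟫`.
The growth condition in the direction of `P x`, where `⟪x, P x⟫ = ‖P x‖² ≤ Q`, bounds the drift
term by `μ Q^{-3/2} ‖P x‖² ≤ μ H`. Since `tr (P a P) = ∑ⱼ ⟪a yⱼ, yⱼ⟫` and `Ĝ = Q^{-1/2} P x`,
the diffusion term equals `½ Q^{-3/2} (3 ⟪a Ĝ, Ĝ⟫ - ∑ⱼ ⟪a yⱼ, yⱼ⟫)`, which is nonpositive.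
-/

open RealInnerProductSpace

section OneAddNormSqRpow

variable {E F : Type*} [NormedAddCommGroup E] [InnerProductSpace ℝ E]
  [NormedAddCommGroup F] [InnerProductSpace ℝ F] (P : E →L[ℝ] F) (p : ℝ)

theorem hasFDerivAt_one_add_norm_sq_rpow (x : E) :
    HasFDerivAt (fun z => (1 + ‖P z‖ ^ 2) ^ p)
      ((2 * p * (1 + ‖P x‖ ^ 2) ^ (p - 1)) • (innerSL ℝ (P x)).comp P) x := by
  have h := ((P.hasFDerivAt (x := x)).norm_sq.const_add 1).rpow_const (p := p)
    (Or.inl (by positivity))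
  convert h using 1
  ext v
  simp only [smul_apply, ContinuousLinearMap.comp_apply, innerSL_apply_apply, smul_eq_mul,
    nsmul_eq_mul]
  ring

theorem fderiv_one_add_norm_sq_rpow :
    fderiv ℝ (fun z => (1 + ‖P z‖ ^ 2) ^ p)
      = fun x => (2 * p * (1 + ‖P x‖ ^ 2) ^ (p - 1)) • (innerSL ℝ (P x)).comp P :=
  funext fun x => (hasFDerivAt_one_add_norm_sq_rpow P p x).fderiv

theorem fderiv_fderiv_one_add_norm_sq_rpow_apply (x u v : E) :
    fderiv ℝ (fderiv ℝ fun z => (1 + ‖P z‖ ^ 2) ^ p) x u v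
      = 2 * p * (1 + ‖P x‖ ^ 2) ^ (p - 1) * ⟪P u, P v⟫
        + 4 * p * (p - 1) * (1 + ‖P x‖ ^ 2) ^ (p - 2) * (⟪P x, P u⟫ * ⟪P x, P v⟫) := by
  let T : E →L[ℝ] E →L[ℝ] ℝ :=
    ((ContinuousLinearMap.compL ℝ E F ℝ).flip P).comp ((innerSL ℝ).comp P)
  have h : HasFDerivAt (fun z => (2 * p * (1 + ‖P z‖ ^ 2) ^ (p - 1)) • T z) _ x :=
    ((hasFDerivAt_one_add_norm_sq_rpow P (p - 1) x).const_mul (2 * p)).smul T.hasFDerivAt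
  rw [fderiv_one_add_norm_sq_rpow]
  change fderiv ℝ (fun z => _ • T z) x u v = _
  rw [h.fderiv]
  simp only [T, add_apply, smul_apply, ContinuousLinearMap.smulRight_apply,
    ContinuousLinearMap.comp_apply, ContinuousLinearMap.flip_apply,
    ContinuousLinearMap.compL_apply, innerSL_apply_apply, smul_eq_mul, sub_sub]
  norm_num
  ring

end OneAddNormSqRpow

section SpanProjection

variable {ι k E F : Type*} [Fintype ι] [Fintype k] [NormedAddCommGroup E]
  [InnerProductSpace ℝ E] [NormedAddCommGroup F] [InnerProductSpace ℝ F]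

theorem OrthonormalBasis.sum_inner_map_mul_inner (e : OrthonormalBasis ι ℝ E) (A : E →L[ℝ] F)
    (w : F) (z : E) : ∑ i, ⟪w, A (e i)⟫ * ⟪z, e i⟫ = ⟪w, A z⟫ := by
  conv_rhs => rw [← e.sum_repr' z]
  simp [inner_sum, real_inner_smul_right, real_inner_comm z, mul_comm]

theorem abs_inner_le_of_forall_norm_eq_one {v x : E} {μ : ℝ}
    (h : ∀ u : E, ‖u‖ = 1 → |⟪v, u⟫| ≤ μ * |⟪x, u⟫|) (w : E) : |⟪v, w⟫| ≤ μ * |⟪x, w⟫| := by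
  rcases eq_or_ne w 0 with rfl | hw
  · simp
  have hn : 0 < ‖w‖ := norm_pos_iff.mpr hw
  have hu := h (‖w‖⁻¹ • w) (by rw [norm_smul, norm_inv, norm_norm, inv_mul_cancel₀ hn.ne'])
  rwa [real_inner_smul_right, real_inner_smul_right, abs_mul, abs_mul, abs_inv, abs_norm,
    mul_left_comm, mul_le_mul_iff_of_pos_left (inv_pos.mpr hn)] at hu

variable (y : k → E)

noncomputable def spanProjection : E →L[ℝ] E := ∑ j, InnerProductSpace.rankOne ℝ (y j) (y j)

theorem spanProjection_apply (z : E) : spanProjection y z = ∑ j, ⟪y j, z⟫ • y j := by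
  simp [spanProjection]

theorem inner_spanProjection_left (u v : E) :
    ⟪spanProjection y u, v⟫ = ∑ j, ⟪y j, u⟫ * ⟪y j, v⟫ := by
  simp [spanProjection_apply, sum_inner, real_inner_smul_left]

variable {y}

theorem inner_spanProjection_spanProjection (hy : Orthonormal ℝ y) (u v : E) :
    ⟪spanProjection y u, spanProjection y v⟫ = ⟪spanProjection y u, v⟫ := by
  rw [inner_spanProjection_left y u v, spanProjection_apply, spanProjection_apply, hy.inner_sum]
  rfl

theorem inner_self_spanProjection (hy : Orthonormal ℝ y) (u : E) :
    ⟪u, spanProjection y u⟫ = ‖spanProjection y u‖ ^ 2 := by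
  rw [← real_inner_self_eq_norm_sq, inner_spanProjection_spanProjection hy, real_inner_comm]

theorem sum_inner_spanProjection_map (hy : Orthonormal ℝ y) (e : OrthonormalBasis ι ℝ E)
    (A : E →L[ℝ] E) :
    ∑ i, ⟪spanProjection y (A (e i)), spanProjection y (e i)⟫ = ∑ j, ⟪A (y j), y j⟫ := by
  simp only [inner_spanProjection_spanProjection hy, inner_spanProjection_left]
  rw [Finset.sum_comm]
  exact Finset.sum_congr rfl fun j _ => by
    rw [e.sum_inner_map_mul_inner A (y j) (y j), real_inner_comm]

theorem sum_inner_spanProjection_mul_inner_spanProjection (hy : Orthonormal ℝ y)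
    (e : OrthonormalBasis ι ℝ E) (A : E →L[ℝ] E) (x : E) :
    ∑ i, ⟪spanProjection y x, spanProjection y (A (e i))⟫
        * ⟪spanProjection y x, spanProjection y (e i)⟫
      = ⟪A (spanProjection y x), spanProjection y x⟫ := by
  simp only [inner_spanProjection_spanProjection hy]
  rw [e.sum_inner_map_mul_inner A, real_inner_comm]

theorem sum_fderiv_fderiv_one_add_norm_sq_rpow_spanProjection (hy : Orthonormal ℝ y) (p : ℝ)
    (e : OrthonormalBasis ι ℝ E) (A : E →L[ℝ] E) (x : E) :
    ∑ i, fderiv ℝ (fderiv ℝ fun z => (1 + ‖spanProjection y z‖ ^ 2) ^ p) x (A (e i)) (e i)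
      = 2 * p * (1 + ‖spanProjection y x‖ ^ 2) ^ (p - 1) * ∑ j, ⟪A (y j), y j⟫
        + 4 * p * (p - 1) * (1 + ‖spanProjection y x‖ ^ 2) ^ (p - 2)
          * ⟪A (spanProjection y x), spanProjection y x⟫ := by
  simp only [fderiv_fderiv_one_add_norm_sq_rpow_apply, Finset.sum_add_distrib, ← Finset.mul_sum,
    sum_inner_spanProjection_map hy, sum_inner_spanProjection_mul_inner_spanProjection hy]

theorem inner_gradient_one_add_norm_sq_rpow_neg_half_le [CompleteSpace E] (hy : Orthonormal ℝ y)
    {μ : ℝ} (hμ : 0 ≤ μ) {v x : E} (hv : ∀ u : E, ‖u‖ = 1 → |⟪v, u⟫| ≤ μ * |⟪x, u⟫|) :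
    ⟪v, gradient (fun z => (1 + ‖spanProjection y z‖ ^ 2) ^ (-(1 / 2) : ℝ)) x⟫
      ≤ μ * (1 + ‖spanProjection y x‖ ^ 2) ^ (-(1 / 2) : ℝ) := by
  set Q := 1 + ‖spanProjection y x‖ ^ 2
  have hQ : 0 < Q := by positivity
  have hPv : -⟪spanProjection y x, v⟫ ≤ μ * ‖spanProjection y x‖ ^ 2 := by
    have h := abs_inner_le_of_forall_norm_eq_one hv (spanProjection y x)
    rw [inner_self_spanProjection hy, abs_of_nonneg (sq_nonneg ‖spanProjection y x‖),
      real_inner_comm] at h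
    exact (neg_le_abs _).trans h
  rw [inner_gradient_right, conj_trivial, (hasFDerivAt_one_add_norm_sq_rpow _ _ x).fderiv,
    Real.rpow_sub_one hQ.ne', smul_apply, ContinuousLinearMap.comp_apply, innerSL_apply_apply,
    smul_eq_mul, inner_spanProjection_spanProjection hy]
  calc 2 * -(1 / 2) * (Q ^ (-(1 / 2) : ℝ) / Q) * ⟪spanProjection y x, v⟫
      = Q ^ (-(1 / 2) : ℝ) / Q * -⟪spanProjection y x, v⟫ := by ring
    _ ≤ Q ^ (-(1 / 2) : ℝ) / Q * (μ * Q) := by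
      gcongr
      exact hPv.trans (by gcongr; exact le_add_of_nonneg_left zero_le_one)
    _ = μ * Q ^ (-(1 / 2) : ℝ) := by field_simp

theorem sum_fderiv_fderiv_one_add_norm_sq_rpow_neg_half_nonpos (hy : Orthonormal ℝ y)
    (e : OrthonormalBasis ι ℝ E) (A : E →L[ℝ] E) (x : E)
    (hA : 3 * ⟪A ((1 + ‖spanProjection y x‖ ^ 2) ^ (-(1 / 2) : ℝ) • spanProjection y x),
        (1 + ‖spanProjection y x‖ ^ 2) ^ (-(1 / 2) : ℝ) • spanProjection y x⟫
      ≤ ∑ j, ⟪A (y j), y j⟫) :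
    ∑ i, fderiv ℝ (fderiv ℝ fun z => (1 + ‖spanProjection y z‖ ^ 2) ^ (-(1 / 2) : ℝ)) x
      (A (e i)) (e i) ≤ 0 := by
  set Q := 1 + ‖spanProjection y x‖ ^ 2
  set t := Q ^ (-(1 / 2) : ℝ)
  have hQ : 0 < Q := by positivity
  have ht_sq : t * t = Q⁻¹ := by
    rw [← Real.rpow_add hQ, ← Real.rpow_neg_one]
    norm_num
  rw [map_smul, real_inner_smul_left, real_inner_smul_right, ← mul_assoc t, ht_sq] at hA
  rw [sum_fderiv_fderiv_one_add_norm_sq_rpow_spanProjection hy, Real.rpow_sub_one hQ.ne',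
    Real.rpow_sub hQ, Real.rpow_two]
  calc 2 * -(1 / 2) * (t / Q) * ∑ j, ⟪A (y j), y j⟫
        + 4 * -(1 / 2) * (-(1 / 2) - 1) * (t / Q ^ 2)
          * ⟪A (spanProjection y x), spanProjection y x⟫
      = t / Q * (3 * (Q⁻¹ * ⟪A (spanProjection y x), spanProjection y x⟫)
          - ∑ j, ⟪A (y j), y j⟫) := by
        field_simp
        ring
    _ ≤ 0 := mul_nonpos_of_nonneg_of_nonpos (by positivity) (by linarith)

end SpanProjection

theorem generator_bound_general (d k : ℕ) (μ : ℝ) (hμ : 0 < μ)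
    (y : Fin k → EuclideanSpace ℝ (Fin d)) (hy : Orthonormal ℝ y)
    (b : EuclideanSpace ℝ (Fin d) → EuclideanSpace ℝ (Fin d))
    (hb : ∀ x u : EuclideanSpace ℝ (Fin d), ‖u‖ = 1 → |⟪b x, u⟫| ≤ μ * |⟪x, u⟫|)
    (a : EuclideanSpace ℝ (Fin d) →
      (EuclideanSpace ℝ (Fin d) →L[ℝ] EuclideanSpace ℝ (Fin d)))
    (G : EuclideanSpace ℝ (Fin d) → EuclideanSpace ℝ (Fin d))
    (hG : ∀ x, G x = ∑ j, ⟪y j, x⟫ • y j)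
    (H : EuclideanSpace ℝ (Fin d) → ℝ)
    (hH : ∀ x, H x = (1 + ‖G x‖ ^ 2) ^ (-(1 / 2) : ℝ))
    (Ghat : EuclideanSpace ℝ (Fin d) → EuclideanSpace ℝ (Fin d))
    (hGhat : ∀ x, Ghat x = H x • G x)
    (hbal : ∀ x, 3 * ⟪a x (Ghat x), Ghat x⟫ ≤ ∑ j, ⟪a x (y j), y j⟫) :
    ∀ x, ⟪b x, gradient H x⟫
        + (1 / 2) * ∑ i, fderiv ℝ (fun z => fderiv ℝ H z) x
            (a x (EuclideanSpace.basisFun (Fin d) ℝ i))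
            (EuclideanSpace.basisFun (Fin d) ℝ i)
      ≤ μ * H x := by
  intro x
  obtain rfl : G = spanProjection y :=
    funext fun z => (hG z).trans (spanProjection_apply y z).symm
  obtain rfl : H = fun z => (1 + ‖spanProjection y z‖ ^ 2) ^ (-(1 / 2) : ℝ) := funext hH
  have hdrift := inner_gradient_one_add_norm_sq_rpow_neg_half_le hy hμ.le (hb x)
  have hdiffusion := sum_fderiv_fderiv_one_add_norm_sq_rpow_neg_half_nonpos hy
    (EuclideanSpace.basisFun (Fin d) ℝ) (a x) x (by simpa only [hGhat] using hbal x)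
  beta_reduce
  linarith

/-- Proposition `generator_bound` of the paper: if the drift `b` satisfies the
directional linear growth `|⟨b x, u⟩| ≤ μ |⟨x, u⟩|` for all unit `u`, and the
symmetric positive semidefinite dispersion `a = σσᵀ` satisfies
`∑ⱼ ⟨a yⱼ, yⱼ⟩ ≥ 3 ⟨a Ĝ, Ĝ⟩` pointwise, then the elliptic operator
`A g x = ⟨b x, ∇g x⟩ + ½ Tr (a x · Hess g x)` applied to
`H x = (1+|G x|²)^{-1/2}` satisfies `A H ≤ μ H` on `ℝ^d`.  The trace of
`a x · Hess H x` is computed as `∑ᵢ Hess H x (a x eᵢ, eᵢ)` over the standard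
orthonormal basis, using the second derivative as a bilinear form. -/
theorem generator_bound (d k : ℕ) (μ : ℝ) (hμ : 0 < μ)
    (y : Fin k → EuclideanSpace ℝ (Fin d)) (hy : Orthonormal ℝ y)
    (b : EuclideanSpace ℝ (Fin d) → EuclideanSpace ℝ (Fin d))
    (hb : ∀ x u : EuclideanSpace ℝ (Fin d), ‖u‖ = 1 → |⟪b x, u⟫| ≤ μ * |⟪x, u⟫|)
    (a : EuclideanSpace ℝ (Fin d) →
      (EuclideanSpace ℝ (Fin d) →L[ℝ] EuclideanSpace ℝ (Fin d)))
    (hsymm : ∀ x u v, ⟪a x u, v⟫ = ⟪u, a x v⟫)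
    (hpsd : ∀ x v, 0 ≤ ⟪a x v, v⟫)
    (G : EuclideanSpace ℝ (Fin d) → EuclideanSpace ℝ (Fin d))
    (hG : ∀ x, G x = ∑ j, ⟪y j, x⟫ • y j)
    (H : EuclideanSpace ℝ (Fin d) → ℝ)
    (hH : ∀ x, H x = (1 + ‖G x‖ ^ 2) ^ (-(1 / 2) : ℝ))
    (Ghat : EuclideanSpace ℝ (Fin d) → EuclideanSpace ℝ (Fin d))
    (hGhat : ∀ x, Ghat x = H x • G x)
    (hbal : ∀ x, 3 * ⟪a x (Ghat x), Ghat x⟫ ≤ ∑ j, ⟪a x (y j), y j⟫) :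
    ∀ x, ⟪b x, gradient H x⟫
        + (1 / 2) * ∑ i, fderiv ℝ (fun z => fderiv ℝ H z) x
            (a x (EuclideanSpace.basisFun (Fin d) ℝ i))
            (EuclideanSpace.basisFun (Fin d) ℝ i)
      ≤ μ * H x :=
  generator_bound_general d k μ hμ y hy b hb a G hG H hH Ghat hGhat hbal
end

section
/- Suppose H_π satisfies the linear-growth condition H_π(r)^{2ℓ−1}(H_π(r)−2ℓ)H_π'(r) ≤ μr on [0,1], and H_π(r) = a·r^p for r ≥ 1 with p ∈ (0,2], a > 0. If 0 ≤ ℓ ≤ 1/p − 1/2 and a ≤ (μ/p)^{1/(2ℓ+1)} − ℓ, then H_π(r)^{2ℓ−1}(H_π(r)−2ℓ)H_π'(r) ≤ μr holds for all r ≥ 1 as well. -/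
open Real

/-- If `H_π` satisfies the linear growth condition
`H_π(r)^{2ℓ−1} (H_π(r) − 2ℓ) H_π'(r) ≤ μ r` on `[0,1]`, and `H_π r = a r^p` for
`r ≥ 1` with `p ∈ (0,2]`, `a > 0` (so `H_π'(r) = a p r^{p−1}` for `r ≥ 1`), and
if `0 ≤ ℓ ≤ 1/p − 1/2` and `a ≤ (μ/p)^{1/(2ℓ+1)} − ℓ`, then the condition
`H_π(r)^{2ℓ−1} (H_π(r) − 2ℓ) H_π'(r) ≤ μ r` also holds for all `r ≥ 1`. -/
theorem power_law_LG (μ ℓ a p : ℝ) (hμ : 0 < μ) (hℓ0 : 0 ≤ ℓ)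
    (hp : p ∈ Set.Ioc (0 : ℝ) 2) (ha : 0 < a)
    (hℓ : ℓ ≤ 1 / p - 1 / 2) (haμ : a ≤ (μ / p) ^ ((1 : ℝ) / (2 * ℓ + 1)) - ℓ)
    (Hπ : ℝ → ℝ) (hHπ : ∀ r, 0 ≤ Hπ r)
    (hLG01 : ∀ r ∈ Set.Icc (0 : ℝ) 1,
      Hπ r ^ (2 * ℓ - 1) * (Hπ r - 2 * ℓ) * deriv Hπ r ≤ μ * r)
    (hpow : ∀ r ≥ (1 : ℝ), Hπ r = a * r ^ p)
    (hderiv : ∀ r ≥ (1 : ℝ), deriv Hπ r = a * p * r ^ (p - 1)) :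
    ∀ r ≥ (1 : ℝ), Hπ r ^ (2 * ℓ - 1) * (Hπ r - 2 * ℓ) * deriv Hπ r ≤ μ * r := by
  obtain ⟨hp0, hp2⟩ := hp
  intro r hr
  have hr0 : (0 : ℝ) < r := lt_of_lt_of_le one_pos hr
  have hrp : (0 : ℝ) < r ^ p := Real.rpow_pos_of_pos hr0 p
  have hx : (0 : ℝ) < a * r ^ p := mul_pos ha hrp
  rw [hpow r hr, hderiv r hr]
  have hd : (0 : ℝ) < a * p * r ^ (p - 1) :=
    mul_pos (mul_pos ha hp0) (Real.rpow_pos_of_pos hr0 _)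
  -- Step 1: drop the -2ℓ
  have h1 : (a * r ^ p) ^ (2 * ℓ - 1) * (a * r ^ p - 2 * ℓ) ≤ (a * r ^ p) ^ (2 * ℓ) := by
    have h2 : (a * r ^ p) ^ (2 * ℓ - 1) * (a * r ^ p - 2 * ℓ)
        ≤ (a * r ^ p) ^ (2 * ℓ - 1) * (a * r ^ p) := by
      apply mul_le_mul_of_nonneg_left (by linarith) (Real.rpow_nonneg hx.le _)
    calc _ ≤ (a * r ^ p) ^ (2 * ℓ - 1) * (a * r ^ p) := h2
      _ = (a * r ^ p) ^ (2 * ℓ - 1 + 1) := (Real.rpow_add_one hx.ne' _).symm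
      _ = (a * r ^ p) ^ (2 * ℓ) := by norm_num
  have hstep : (a * r ^ p) ^ (2 * ℓ - 1) * (a * r ^ p - 2 * ℓ) * (a * p * r ^ (p - 1))
      ≤ (a * r ^ p) ^ (2 * ℓ) * (a * p * r ^ (p - 1)) :=
    mul_le_mul_of_nonneg_right h1 hd.le
  refine le_trans hstep ?_
  -- rewrite (a r^p)^(2ℓ) = a^(2ℓ) * r^(p*(2ℓ))
  have hsplit : (a * r ^ p) ^ (2 * ℓ) = a ^ (2 * ℓ) * r ^ (p * (2 * ℓ)) := by
    rw [Real.mul_rpow ha.le hrp.le, ← Real.rpow_mul hr0.le]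
  rw [hsplit]
  have hae : a ^ (2 * ℓ) * a = a ^ (2 * ℓ + 1) := (Real.rpow_add_one ha.ne' _).symm
  have hre : r ^ (p * (2 * ℓ)) * r ^ (p - 1) = r ^ (p * (2 * ℓ) + (p - 1)) :=
    (Real.rpow_add hr0 _ _).symm
  have hexp : p * (2 * ℓ) + (p - 1) ≤ 1 := by
    have h1 : p * ℓ ≤ p * (1 / p - 1 / 2) := mul_le_mul_of_nonneg_left hℓ hp0.le
    have h2 : p * (1 / p) = 1 := mul_one_div_cancel hp0.ne'
    nlinarith
  have hbound1 : r ^ (p * (2 * ℓ) + (p - 1)) ≤ r := by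
    calc r ^ (p * (2 * ℓ) + (p - 1)) ≤ r ^ (1 : ℝ) :=
          Real.rpow_le_rpow_of_exponent_le hr hexp
      _ = r := Real.rpow_one r
  have hℓp : (0 : ℝ) < 2 * ℓ + 1 := by linarith
  have hbound2 : a ^ (2 * ℓ + 1) ≤ μ / p := by
    have ha2 : a ≤ (μ / p) ^ ((1 : ℝ) / (2 * ℓ + 1)) := by linarith
    have h3 : a ^ (2 * ℓ + 1) ≤ ((μ / p) ^ ((1 : ℝ) / (2 * ℓ + 1))) ^ (2 * ℓ + 1) :=
      Real.rpow_le_rpow ha.le ha2 hℓp.le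
    rwa [← Real.rpow_mul (by positivity : (0:ℝ) ≤ μ / p),
      one_div_mul_cancel hℓp.ne', Real.rpow_one] at h3
  calc a ^ (2 * ℓ) * r ^ (p * (2 * ℓ)) * (a * p * r ^ (p - 1))
      = (a ^ (2 * ℓ) * a) * (r ^ (p * (2 * ℓ)) * r ^ (p - 1)) * p := by ring
    _ = a ^ (2 * ℓ + 1) * r ^ (p * (2 * ℓ) + (p - 1)) * p := by rw [hae, hre]
    _ ≤ (μ / p) * r * p := by
        apply mul_le_mul_of_nonneg_right _ hp0.le
        exact mul_le_mul hbound2 hbound1 (Real.rpow_nonneg hr0.le _) (by positivity)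
    _ = μ * r := by field_simp
end
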